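/- The squared Dunkl angular momentum acts as Λ̂² f = ℏ²(−|x|²Δ_D f + (x·∇_D)²f + (x·∇_D)((N−2)f + 2Σᵢμᵢ R̂ᵢ f)), where Δ_D is the Dunkl Laplacian and x·∇_D = Σᵢ xᵢDᵢ. -/

import Mathlib

open Complex BigOperators Finset

noncomputable section

variable {N : ℕ}

/-- Reflection of the `i`-th coordinate: `σᵢ(x)` flips the sign of `xᵢ`. -/
def flipC (i : Fin N) (x : Fin N → ℝ) : Fin N → ℝ := Function.update x i (-(x i))

/-- The reflection operator `R̂ᵢ f (x) = f (σᵢ x)`. -/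
def Rop (i : Fin N) (f : (Fin N → ℝ) → ℂ) : (Fin N → ℝ) → ℂ := fun x => f (flipC i x)

/-- The Dunkl derivative `Dᵢ f (x) = ∂ᵢ f(x) + (μᵢ/xᵢ)(f(x) - f(σᵢ x))`. -/
def Dop (μ : Fin N → ℝ) (i : Fin N) (f : (Fin N → ℝ) → ℂ) : (Fin N → ℝ) → ℂ :=
  fun x => fderiv ℝ f x (Pi.single i 1) + ((μ i : ℂ) / (x i : ℂ)) * (f x - f (flipC i x))

/-- The Dunkl momentum operator `π̂ᵢ = -iℏ Dᵢ`. -/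
def Pop (μ : Fin N → ℝ) (hb : ℝ) (i : Fin N) (f : (Fin N → ℝ) → ℂ) : (Fin N → ℝ) → ℂ :=
  fun x => -(Complex.I * (hb : ℂ)) * Dop μ i f x

/-- The Dunkl angular momentum operator `Λ̂ᵢⱼ = x̂ᵢ π̂ⱼ - x̂ⱼ π̂ᵢ`. -/
def Lam (μ : Fin N → ℝ) (hb : ℝ) (i j : Fin N) (f : (Fin N → ℝ) → ℂ) : (Fin N → ℝ) → ℂ :=
  fun x => (x i : ℂ) * Pop μ hb j f x - (x j : ℂ) * Pop μ hb i f x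

/-- The complement of the coordinate hyperplanes in `ℝ^N`. -/
def Udom (N : ℕ) : Set (Fin N → ℝ) := {x | ∀ i, x i ≠ 0}

/-- The Dunkl Laplacian `Δ_D = Σᵢ Dᵢ²`. -/
def lapD (μ : Fin N → ℝ) (f : (Fin N → ℝ) → ℂ) : (Fin N → ℝ) → ℂ :=
  fun x => ∑ i, Dop μ i (Dop μ i f) x

/-- The Dunkl Euler operator `x·∇_D = Σᵢ xᵢ Dᵢ`. -/
def XD (μ : Fin N → ℝ) (f : (Fin N → ℝ) → ℂ) : (Fin N → ℝ) → ℂ :=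
  fun x => ∑ i, (x i : ℂ) * Dop μ i f x

lemma flipC_apply (i : Fin N) (x : Fin N → ℝ) (j : Fin N) :
    flipC i x j = if j = i then -(x i) else x j := by
  simp [flipC, Function.update]

lemma flipC_mem {i : Fin N} {x} (hx : x ∈ Udom N) : flipC i x ∈ Udom N := by
  intro j; rw [flipC_apply]
  split
  · simpa using hx i
  · exact hx j

lemma flipC_flipC_self (i : Fin N) (x : Fin N → ℝ) : flipC i (flipC i x) = x := by
  funext j
  rw [flipC_apply, flipC_apply, flipC_apply]
  by_cases h : j = i <;> simp [h]

lemma flipC_comm (i j : Fin N) (x : Fin N → ℝ) : flipC i (flipC j x) = flipC j (flipC i x) := by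
  by_cases hij : i = j
  · rw [hij]
  funext k
  simp only [flipC_apply]
  by_cases h1 : k = i <;> by_cases h2 : k = j <;>
    simp [h1, h2, hij, Ne.symm hij] <;> simp_all

def flipCL (i : Fin N) : (Fin N → ℝ) →L[ℝ] (Fin N → ℝ) :=
  ContinuousLinearMap.pi (fun j => if j = i then -(ContinuousLinearMap.proj i) else ContinuousLinearMap.proj j)

lemma flipCL_coe (i : Fin N) : ⇑(flipCL i) = flipC i := by
  funext x j
  rw [flipC_apply]
  simp only [flipCL, ContinuousLinearMap.pi_apply]
  split <;> simp

lemma flipCL_single (i k : Fin N) :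
    flipCL i (Pi.single k (1:ℝ)) = if k = i then -(Pi.single i (1:ℝ)) else Pi.single k (1:ℝ) := by
  rw [flipCL_coe]
  funext j
  rw [flipC_apply]
  by_cases hk : k = i <;> by_cases hj : j = i <;>
    simp [hk, hj, Pi.single_apply] <;> simp_all [Ne.symm]

lemma Uopen (N : ℕ) : IsOpen (Udom N) := by
  have h : Udom N = ⋂ i, (fun x : Fin N → ℝ => x i) ⁻¹' ({0}ᶜ) := by
    ext x; simp [Udom]
  rw [h]
  exact isOpen_iInter_of_finite fun i => isOpen_compl_singleton.preimage (continuous_apply i)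

lemma coordC_eq (j : Fin N) :
    (fun y : Fin N → ℝ => ((y j : ℝ) : ℂ)) =
      ⇑((Complex.ofRealCLM).comp (ContinuousLinearMap.proj j : (Fin N → ℝ) →L[ℝ] ℝ)) := rfl

lemma diff_coordC (j : Fin N) (x : Fin N → ℝ) :
    DifferentiableAt ℝ (fun y : Fin N → ℝ => ((y j : ℝ) : ℂ)) x := by
  rw [coordC_eq]; exact (ContinuousLinearMap.differentiable _).differentiableAt

lemma fderiv_coordC (j : Fin N) (x v : Fin N → ℝ) :
    fderiv ℝ (fun y : Fin N → ℝ => ((y j : ℝ) : ℂ)) x v = ((v j : ℝ) : ℂ) := by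
  rw [coordC_eq, ContinuousLinearMap.fderiv]; rfl

lemma fderiv_comp_flip (g : (Fin N → ℝ) → ℂ) (i : Fin N) (x v : Fin N → ℝ)
    (hg : DifferentiableAt ℝ g (flipC i x)) :
    fderiv ℝ (fun y => g (flipC i y)) x v = fderiv ℝ g (flipC i x) (flipCL i v) := by
  have h : (fun y => g (flipC i y)) = g ∘ ⇑(flipCL i) := by rw [flipCL_coe]; rfl
  rw [h, fderiv_comp x (by rwa [flipCL_coe]) (flipCL i).differentiableAt,
    ContinuousLinearMap.fderiv]
  simp [flipCL_coe]

lemma diff_comp_flip (g : (Fin N → ℝ) → ℂ) (i : Fin N) (x : Fin N → ℝ)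
    (hg : DifferentiableAt ℝ g (flipC i x)) :
    DifferentiableAt ℝ (fun y => g (flipC i y)) x := by
  have h : (fun y => g (flipC i y)) = g ∘ ⇑(flipCL i) := by rw [flipCL_coe]; rfl
  rw [h]
  exact DifferentiableAt.comp x (by rwa [flipCL_coe]) (flipCL i).differentiableAt


-- Dop linearity lemmas
lemma Dop_add (μ : Fin N → ℝ) (i : Fin N) (g h : (Fin N → ℝ) → ℂ) (x : Fin N → ℝ)
    (hg : DifferentiableAt ℝ g x) (hh : DifferentiableAt ℝ h x) :
    Dop μ i (fun y => g y + h y) x = Dop μ i g x + Dop μ i h x := by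
  simp only [Dop, fderiv_fun_add hg hh]
  simp; ring

lemma Dop_sub (μ : Fin N → ℝ) (i : Fin N) (g h : (Fin N → ℝ) → ℂ) (x : Fin N → ℝ)
    (hg : DifferentiableAt ℝ g x) (hh : DifferentiableAt ℝ h x) :
    Dop μ i (fun y => g y - h y) x = Dop μ i g x - Dop μ i h x := by
  simp only [Dop, fderiv_fun_sub hg hh]
  simp; ring

lemma Dop_const_mul (μ : Fin N → ℝ) (i : Fin N) (c : ℂ) (g : (Fin N → ℝ) → ℂ) (x : Fin N → ℝ)
    (hg : DifferentiableAt ℝ g x) :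
    Dop μ i (fun y => c * g y) x = c * Dop μ i g x := by
  simp only [Dop, fderiv_const_mul hg c]
  simp; ring

lemma Dop_sum (μ : Fin N → ℝ) (i : Fin N) (g : Fin N → (Fin N → ℝ) → ℂ) (x : Fin N → ℝ)
    (hg : ∀ j, DifferentiableAt ℝ (g j) x) :
    Dop μ i (fun y => ∑ j, g j y) x = ∑ j, Dop μ i (g j) x := by
  simp only [Dop, fderiv_fun_sum (fun j _ => hg j)]
  simp [Finset.mul_sum, Finset.sum_add_distrib, mul_sub, Finset.sum_sub_distrib]

lemma Dop_coord_mul (μ : Fin N → ℝ) (i j : Fin N) (g : (Fin N → ℝ) → ℂ) (x : Fin N → ℝ)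
    (hx : x ∈ Udom N) (hg : DifferentiableAt ℝ g x) :
    Dop μ i (fun y => ((y j : ℝ) : ℂ) * g y) x
      = (if j = i then g x + 2 * (μ i : ℂ) * g (flipC i x) else 0) + ((x j : ℝ) : ℂ) * Dop μ i g x := by
  have hxi : ((x i : ℝ) : ℂ) ≠ 0 := by
    simpa using hx i
  have hder : fderiv ℝ (fun y => ((y j : ℝ) : ℂ) * g y) x (Pi.single i 1)
      = (((Pi.single i (1:ℝ) : Fin N → ℝ) j : ℝ) : ℂ) * g x + ((x j : ℝ) : ℂ) * fderiv ℝ g x (Pi.single i 1) := by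
    rw [fderiv_fun_mul (diff_coordC j x) hg]
    simp [fderiv_coordC]
    ring
  simp only [Dop, hder, flipC_apply, Pi.single_apply]
  by_cases h : j = i
  · subst h
    simp only [if_pos rfl, if_true]
    push_cast
    field_simp
    ring
  · rw [if_neg h, if_neg h, if_neg (fun hh => h hh)]
    simp
    ring

lemma Dop_comp_flip (μ : Fin N → ℝ) (i j : Fin N) (g : (Fin N → ℝ) → ℂ) (x : Fin N → ℝ)
    (hx : x ∈ Udom N) (hg : DifferentiableAt ℝ g (flipC j x)) :
    Dop μ i (fun y => g (flipC j y)) x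
      = (if i = j then -1 else 1) * Dop μ i g (flipC j x) := by
  have hxi : ((x i : ℝ) : ℂ) ≠ 0 := by simpa using hx i
  simp only [Dop, fderiv_comp_flip g j x _ hg, flipC_comm j i x, flipC_apply]
  by_cases h : i = j
  · subst h
    rw [flipCL_single, if_pos rfl, flipC_flipC_self]
    simp only [if_pos rfl, map_neg, if_true]
    push_cast
    field_simp
    ring
  · rw [flipCL_single, if_neg h, if_neg (fun hh => h hh), if_neg h]
    ring

lemma diff_f {f : (Fin N → ℝ) → ℂ} (hf : ContDiffOn ℝ (⊤ : ℕ∞) f (Udom N)) {x : Fin N → ℝ}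
    (hx : x ∈ Udom N) : DifferentiableAt ℝ f x :=
  (hf.contDiffAt ((Uopen N).mem_nhds hx)).differentiableAt (by simp)

lemma diff_Dop (μ : Fin N → ℝ) (j : Fin N) {f : (Fin N → ℝ) → ℂ}
    (hf : ContDiffOn ℝ (⊤ : ℕ∞) f (Udom N)) {x : Fin N → ℝ} (hx : x ∈ Udom N) :
    DifferentiableAt ℝ (Dop μ j f) x := by
  have hfa : ContDiffAt ℝ (⊤ : ℕ∞) f x := hf.contDiffAt ((Uopen N).mem_nhds hx)
  have h1 : DifferentiableAt ℝ (fun y => fderiv ℝ f y (Pi.single j 1)) x := by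
    have h := hfa.fderiv_right (m := 1) (by exact WithTop.coe_le_coe.mpr (le_top : ((1 + 1 : ℕ) : ℕ∞) ≤ ⊤))
    exact (h.differentiableAt one_ne_zero).clm_apply (differentiableAt_const _)
  have hxj : ((x j : ℝ) : ℂ) ≠ 0 := by simpa using hx j
  have h2 : DifferentiableAt ℝ
      (fun y : Fin N → ℝ => ((μ j : ℝ) : ℂ) / ((y j : ℝ) : ℂ) * (f y - f (flipC j y))) x := by
    have hdveq : (fun y : Fin N → ℝ => ((μ j : ℝ) : ℂ) / ((y j : ℝ) : ℂ))
        = fun y : Fin N → ℝ => ((μ j : ℝ) : ℂ) * (((y j : ℝ) : ℂ))⁻¹ := by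
      funext y; rw [div_eq_mul_inv]
    refine DifferentiableAt.mul ?_ ?_
    · rw [hdveq]
      exact (differentiableAt_const _).mul ((diff_coordC j x).inv hxj)
    · exact (diff_f hf hx).sub (diff_comp_flip f j x (diff_f hf (flipC_mem hx)))
  exact h1.add h2

lemma key_sum (n : ℕ) (X A m : Fin n → ℂ) (B C : Fin n → Fin n → ℂ) (H : ℂ) :
    (∑ i, ∑ j, if i < j then
        -H * (X i^2 * B j j + X j^2 * B i i - X i * X j * (B j i + B i j)
          - X i * A i - X j * A j - 2 * m j * X i * C i j - 2 * m i * X j * C j i) else 0)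
      = H * (-(∑ i, X i^2) * (∑ i, B i i) + ((∑ i, ∑ j, X i * X j * B i j) + (∑ i, X i * A i)
          + 2 * ∑ i, m i * X i * C i i)
          + (((n:ℂ) - 2) * (∑ i, X i * A i)
            + 2 * ∑ i, ∑ j, m j * X i * ((if i = j then (-1:ℂ) else 1) * C i j))) := by
  set g : Fin n → Fin n → ℂ := fun i j =>
    -H * (X i^2 * B j j - X i * X j * B j i - X i * A i - 2 * m j * X i * C i j) with hg
  have pull2 : ∀ (c : ℂ) (t : Fin n → Fin n → ℂ),
      ∑ i : Fin n, ∑ j : Fin n, c * t i j = c * ∑ i : Fin n, ∑ j : Fin n, t i j := by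
    intro c t
    rw [Finset.mul_sum]
    exact Finset.sum_congr rfl fun i _ => (Finset.mul_sum _ _ _).symm
  have A1 : (∑ i, ∑ j, if i < j then
        -H * (X i^2 * B j j + X j^2 * B i i - X i * X j * (B j i + B i j)
          - X i * A i - X j * A j - 2 * m j * X i * C i j - 2 * m i * X j * C j i) else 0)
      = (∑ i : Fin n, ∑ j : Fin n, if i < j then g i j else 0)
        + (∑ i : Fin n, ∑ j : Fin n, if i < j then g j i else 0) := by
    rw [← Finset.sum_add_distrib]
    refine Finset.sum_congr rfl fun i _ => ?_
    rw [← Finset.sum_add_distrib]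
    refine Finset.sum_congr rfl fun j _ => ?_
    by_cases h : i < j
    · simp only [if_pos h, hg]; ring
    · simp [h]
  have A2 : (∑ i : Fin n, ∑ j : Fin n, if i < j then g j i else 0)
      = ∑ i : Fin n, ∑ j : Fin n, if j < i then g i j else 0 := Finset.sum_comm
  have A3 : (∑ i : Fin n, ∑ j : Fin n, if i < j then g i j else 0)
        + (∑ i : Fin n, ∑ j : Fin n, if j < i then g i j else 0)
      = (∑ i : Fin n, ∑ j : Fin n, g i j) - ∑ i : Fin n, g i i := by
    have hpt : ∀ i j : Fin n, ((if i < j then g i j else 0) + (if j < i then g i j else 0))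
        = g i j - (if i = j then g i j else 0) := by
      intro i j
      rcases lt_trichotomy i j with h | h | h
      · simp [h, not_lt_of_gt h, h.ne]
      · simp [h]
      · simp [h, not_lt_of_gt h, h.ne']
    have hrow : ∀ i : Fin n, (∑ j : Fin n, if i < j then g i j else 0)
          + (∑ j : Fin n, if j < i then g i j else 0)
        = (∑ j : Fin n, g i j) - g i i := by
      intro i
      rw [← Finset.sum_add_distrib]
      calc ∑ j : Fin n, ((if i < j then g i j else 0) + (if j < i then g i j else 0))
          = ∑ j : Fin n, (g i j - (if i = j then g i j else 0)) :=
            Finset.sum_congr rfl fun j _ => hpt i j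
        _ = (∑ j : Fin n, g i j) - g i i := by
            rw [Finset.sum_sub_distrib]
            simp [Finset.sum_ite_eq]
    rw [← Finset.sum_add_distrib,
      Finset.sum_congr rfl fun i (_ : i ∈ (univ : Finset (Fin n))) => hrow i,
      Finset.sum_sub_distrib]
  rw [A1, A2, A3]
  have e1 : ∑ i : Fin n, ∑ j : Fin n, X i^2 * B j j = (∑ i, X i^2) * (∑ j, B j j) :=
    (Finset.sum_mul_sum _ _ _ _).symm
  have e2 : ∑ i : Fin n, ∑ j : Fin n, X i * X j * B j i
      = ∑ i : Fin n, ∑ j : Fin n, X i * X j * B i j := by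
    rw [Finset.sum_comm]
    exact Finset.sum_congr rfl fun i _ => Finset.sum_congr rfl fun j _ => by ring
  have e3 : ∑ i : Fin n, ∑ _j : Fin n, (X i * A i) = (n:ℂ) * ∑ i, X i * A i := by
    simp [Finset.sum_const, Finset.card_univ, Finset.mul_sum, mul_comm]
  have e4 : ∑ i : Fin n, ∑ j : Fin n, m j * X i * ((if i = j then (-1:ℂ) else 1) * C i j)
      = (∑ i : Fin n, ∑ j : Fin n, m j * X i * C i j) - 2 * ∑ i, m i * X i * C i i := by
    have hpt : ∀ i j : Fin n, m j * X i * ((if i = j then (-1:ℂ) else 1) * C i j)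
        = m j * X i * C i j - (if i = j then 2 * (m j * X i * C i j) else 0) := by
      intro i j
      by_cases h : i = j
      · simp [h]; ring
      · simp [h]
    calc ∑ i : Fin n, ∑ j : Fin n, m j * X i * ((if i = j then (-1:ℂ) else 1) * C i j)
        = ∑ i : Fin n, ∑ j : Fin n,
            (m j * X i * C i j - (if i = j then 2 * (m j * X i * C i j) else 0)) :=
          Finset.sum_congr rfl fun i _ => Finset.sum_congr rfl fun j _ => hpt i j
      _ = _ := by
          simp [Finset.sum_sub_distrib, Finset.sum_ite_eq, Finset.mem_univ, Finset.mul_sum]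
  have hL : ∑ i : Fin n, ∑ j : Fin n, g i j
      = -H * (∑ i : Fin n, ∑ j : Fin n, X i^2 * B j j)
        + H * (∑ i : Fin n, ∑ j : Fin n, X i * X j * B j i)
        + H * (∑ i : Fin n, ∑ _j : Fin n, (X i * A i))
        + 2 * H * (∑ i : Fin n, ∑ j : Fin n, m j * X i * C i j) := by
    have inner : ∀ i : Fin n, ∑ j : Fin n, g i j
        = -H * (∑ j : Fin n, X i^2 * B j j) + H * (∑ j : Fin n, X i * X j * B j i)
          + H * (∑ _j : Fin n, (X i * A i)) + 2 * H * (∑ j : Fin n, m j * X i * C i j) := by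
      intro i
      rw [Finset.mul_sum, Finset.mul_sum, Finset.mul_sum, Finset.mul_sum,
        ← Finset.sum_add_distrib, ← Finset.sum_add_distrib, ← Finset.sum_add_distrib]
      exact Finset.sum_congr rfl fun j _ => by simp only [hg]; ring
    rw [Finset.sum_congr rfl fun i (_ : i ∈ (univ : Finset (Fin n))) => inner i,
      Finset.sum_add_distrib, Finset.sum_add_distrib, Finset.sum_add_distrib,
      ← Finset.mul_sum, ← Finset.mul_sum, ← Finset.mul_sum, ← Finset.mul_sum]
  have hD : ∑ i : Fin n, g i i
      = H * (∑ i, X i * A i) + 2 * H * (∑ i, m i * X i * C i i) := by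
    rw [Finset.mul_sum, Finset.mul_sum, ← Finset.sum_add_distrib]
    refine Finset.sum_congr rfl fun i _ => ?_
    simp only [hg]; ring
  rw [hL, hD, e1, e2, e3, e4]
  ring

lemma lam_lam (μ : Fin N → ℝ) (hb : ℝ) (f : (Fin N → ℝ) → ℂ) (hf : ContDiffOn ℝ (⊤ : ℕ∞) f (Udom N))
    (i j : Fin N) (hij : i ≠ j) (x : Fin N → ℝ) (hx : x ∈ Udom N) :
    Lam μ hb i j (Lam μ hb i j f) x =
      -(hb:ℂ)^2 * ((x i : ℂ)^2 * Dop μ j (Dop μ j f) x + (x j : ℂ)^2 * Dop μ i (Dop μ i f) x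
        - (x i : ℂ) * (x j : ℂ) * (Dop μ j (Dop μ i f) x + Dop μ i (Dop μ j f) x)
        - (x i : ℂ) * Dop μ i f x - (x j : ℂ) * Dop μ j f x
        - 2 * (μ j : ℂ) * (x i : ℂ) * Dop μ i f (flipC j x)
        - 2 * (μ i : ℂ) * (x j : ℂ) * Dop μ j f (flipC i x)) := by
  set c : ℂ := -(Complex.I * (hb : ℂ)) with hc
  have hG : Lam μ hb i j f
      = fun y => c * (((y i : ℝ) : ℂ) * Dop μ j f y - ((y j : ℝ) : ℂ) * Dop μ i f y) := by
    funext y; simp only [Lam, Pop, hc]; ring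
  have hdt : ∀ k l : Fin N, ∀ y ∈ Udom N,
      DifferentiableAt ℝ (fun y => ((y k : ℝ) : ℂ) * Dop μ l f y) y := by
    intro k l y hy
    exact (diff_coordC k y).mul (diff_Dop μ l hf hy)
  have hDj : Dop μ j (Lam μ hb i j f) x
      = c * ((x i : ℂ) * Dop μ j (Dop μ j f) x
          - (Dop μ i f x + 2 * (μ j : ℂ) * Dop μ i f (flipC j x)
              + (x j : ℂ) * Dop μ j (Dop μ i f) x)) := by
    rw [hG, Dop_const_mul μ j c _ x ((hdt i j x hx).fun_sub (hdt j i x hx)),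
      Dop_sub μ j _ _ x (hdt i j x hx) (hdt j i x hx),
      Dop_coord_mul μ j i _ x hx (diff_Dop μ j hf hx),
      Dop_coord_mul μ j j _ x hx (diff_Dop μ i hf hx),
      if_neg hij, if_pos rfl]
    ring
  have hDi : Dop μ i (Lam μ hb i j f) x
      = c * ((Dop μ j f x + 2 * (μ i : ℂ) * Dop μ j f (flipC i x)
              + (x i : ℂ) * Dop μ i (Dop μ j f) x)
          - (x j : ℂ) * Dop μ i (Dop μ i f) x) := by
    rw [hG, Dop_const_mul μ i c _ x ((hdt i j x hx).fun_sub (hdt j i x hx)),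
      Dop_sub μ i _ _ x (hdt i j x hx) (hdt j i x hx),
      Dop_coord_mul μ i i _ x hx (diff_Dop μ j hf hx),
      Dop_coord_mul μ i j _ x hx (diff_Dop μ i hf hx),
      if_pos rfl, if_neg (fun h => hij h.symm)]
    ring
  have hcc : c * c = -((hb:ℂ)^2) := by
    calc c * c = (Complex.I * Complex.I) * ((hb:ℂ) * (hb:ℂ)) := by rw [hc]; ring
      _ = -((hb:ℂ)^2) := by rw [Complex.I_mul_I]; ring
  have key : ∀ s t : ℂ, (x i : ℂ) * (c * (c * s)) - (x j : ℂ) * (c * (c * t))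
      = -((hb:ℂ)^2) * ((x i : ℂ) * s - (x j : ℂ) * t) := by
    intro s t
    calc (x i : ℂ) * (c * (c * s)) - (x j : ℂ) * (c * (c * t))
        = (c * c) * ((x i : ℂ) * s - (x j : ℂ) * t) := by ring
      _ = _ := by rw [hcc]
  show (x i : ℂ) * Pop μ hb j (Lam μ hb i j f) x - (x j : ℂ) * Pop μ hb i (Lam μ hb i j f) x = _
  simp only [Pop, ← hc, hDj, hDi, key]
  ring

lemma XD_XD (μ : Fin N → ℝ) (f : (Fin N → ℝ) → ℂ) (hf : ContDiffOn ℝ (⊤ : ℕ∞) f (Udom N))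
    (x : Fin N → ℝ) (hx : x ∈ Udom N) :
    XD μ (XD μ f) x
      = (∑ i, ∑ j, (x i : ℂ) * (x j : ℂ) * Dop μ i (Dop μ j f) x)
        + (∑ i, (x i : ℂ) * Dop μ i f x)
        + 2 * ∑ i, (μ i : ℂ) * (x i : ℂ) * Dop μ i f (flipC i x) := by
  have hrow : ∀ i : Fin N, Dop μ i (XD μ f) x
      = (∑ j, (x j : ℂ) * Dop μ i (Dop μ j f) x) + Dop μ i f x
        + 2 * (μ i : ℂ) * Dop μ i f (flipC i x) := by
    intro i
    have h0 : XD μ f = fun y => ∑ j, ((y j : ℝ) : ℂ) * Dop μ j f y := rfl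
    rw [h0, Dop_sum μ i _ x (fun j => (diff_coordC j x).fun_mul (diff_Dop μ j hf hx))]
    calc ∑ j, Dop μ i (fun y => ((y j : ℝ) : ℂ) * Dop μ j f y) x
        = ∑ j, ((if j = i then Dop μ j f x + 2 * (μ i : ℂ) * Dop μ j f (flipC i x) else 0)
            + (x j : ℂ) * Dop μ i (Dop μ j f) x) :=
          Finset.sum_congr rfl fun j _ => Dop_coord_mul μ i j _ x hx (diff_Dop μ j hf hx)
      _ = _ := by
          rw [Finset.sum_add_distrib, Finset.sum_ite_eq' univ i
            (fun j => Dop μ j f x + 2 * (μ i : ℂ) * Dop μ j f (flipC i x)), if_pos (mem_univ i)]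
          ring
  have hterm : ∀ i : Fin N, (x i : ℂ) * Dop μ i (XD μ f) x
      = (∑ j, (x i : ℂ) * (x j : ℂ) * Dop μ i (Dop μ j f) x) + (x i : ℂ) * Dop μ i f x
        + 2 * ((μ i : ℂ) * (x i : ℂ) * Dop μ i f (flipC i x)) := by
    intro i
    rw [hrow i, mul_add, mul_add, Finset.mul_sum]
    rw [Finset.sum_congr rfl fun j (_ : j ∈ univ) =>
      (by ring : (x i : ℂ) * ((x j : ℂ) * Dop μ i (Dop μ j f) x)
        = (x i : ℂ) * (x j : ℂ) * Dop μ i (Dop μ j f) x)]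
    ring
  show ∑ i, (x i : ℂ) * Dop μ i (XD μ f) x = _
  rw [Finset.sum_congr rfl fun i (_ : i ∈ univ) => hterm i,
    Finset.sum_add_distrib, Finset.sum_add_distrib, ← Finset.mul_sum]

lemma XD_comb (μ : Fin N → ℝ) (f : (Fin N → ℝ) → ℂ) (hf : ContDiffOn ℝ (⊤ : ℕ∞) f (Udom N))
    (x : Fin N → ℝ) (hx : x ∈ Udom N) :
    XD μ (fun y => ((N : ℂ) - 2) * f y + 2 * ∑ j, (μ j : ℂ) * Rop j f y) x
      = ((N : ℂ) - 2) * (∑ i, (x i : ℂ) * Dop μ i f x)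
        + 2 * ∑ i, ∑ j, (μ j : ℂ) * (x i : ℂ)
            * ((if i = j then (-1:ℂ) else 1) * Dop μ i f (flipC j x)) := by
  have hdflip : ∀ j : Fin N, DifferentiableAt ℝ (fun y => f (flipC j y)) x := fun j =>
    diff_comp_flip f j x (diff_f hf (flipC_mem hx))
  have hrow : ∀ i : Fin N,
      Dop μ i (fun y => ((N : ℂ) - 2) * f y + 2 * ∑ j, (μ j : ℂ) * Rop j f y) x
      = ((N : ℂ) - 2) * Dop μ i f x
        + 2 * ∑ j, (μ j : ℂ) * ((if i = j then (-1:ℂ) else 1) * Dop μ i f (flipC j x)) := by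
    intro i
    have hS : ∀ j : Fin N, DifferentiableAt ℝ (fun y => (μ j : ℂ) * Rop j f y) x := by
      intro j
      exact (differentiableAt_const _).mul (hdflip j)
    have hsum : DifferentiableAt ℝ (fun y => ∑ j, (μ j : ℂ) * Rop j f y) x := by
      apply DifferentiableAt.fun_sum
      intro j _
      exact hS j
    rw [Dop_add μ i (fun y => ((N : ℂ) - 2) * f y)
        (fun y => 2 * ∑ j, (μ j : ℂ) * Rop j f y) x
        ((differentiableAt_const _).mul (diff_f hf hx))
        ((differentiableAt_const _).mul hsum),
      Dop_const_mul μ i ((N : ℂ) - 2) f x (diff_f hf hx),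
      Dop_const_mul μ i 2 _ x hsum,
      Dop_sum μ i _ x hS]
    congr 2
    refine Finset.sum_congr rfl fun j _ => ?_
    rw [Dop_const_mul μ i ((μ j : ℝ) : ℂ) (Rop j f) x (hdflip j),
      show Rop j f = fun y => f (flipC j y) from rfl,
      Dop_comp_flip μ i j f x hx (diff_f hf (flipC_mem hx))]
  have hterm : ∀ i : Fin N,
      (x i : ℂ) * Dop μ i (fun y => ((N : ℂ) - 2) * f y + 2 * ∑ j, (μ j : ℂ) * Rop j f y) x
      = ((N : ℂ) - 2) * ((x i : ℂ) * Dop μ i f x)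
        + 2 * ∑ j, (μ j : ℂ) * (x i : ℂ)
            * ((if i = j then (-1:ℂ) else 1) * Dop μ i f (flipC j x)) := by
    intro i
    rw [hrow i, mul_add, Finset.mul_sum, Finset.mul_sum]
    rw [Finset.sum_congr rfl fun j (_ : j ∈ univ) =>
      (by ring : (x i : ℂ) * (2 * ((μ j : ℂ) * ((if i = j then (-1:ℂ) else 1)
          * Dop μ i f (flipC j x))))
        = 2 * ((μ j : ℂ) * (x i : ℂ)
            * ((if i = j then (-1:ℂ) else 1) * Dop μ i f (flipC j x))))]
    rw [← Finset.mul_sum]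
    ring
  show ∑ i, (x i : ℂ) * _ = _
  rw [Finset.sum_congr rfl fun i (_ : i ∈ univ) => hterm i,
    Finset.sum_add_distrib, ← Finset.mul_sum, ← Finset.mul_sum]


/-- The squared Dunkl angular momentum `Λ̂² = Σ_{i<j} Λ̂ᵢⱼ²` satisfies
`Λ̂² f = ℏ²(-|x|²Δ_D f + (x·∇_D)²f + (x·∇_D)((N-2)f + 2Σᵢμᵢ R̂ᵢ f))`. -/
theorem squared_dunkl_angular_momentum (N : ℕ) (hN : 2 ≤ N) (μ : Fin N → ℝ)
    (hb : ℝ) (hbpos : hb > 0)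
    (f : (Fin N → ℝ) → ℂ) (hf : ContDiffOn ℝ (⊤ : ℕ∞) f (Udom N)) :
    ∀ x ∈ Udom N,
      (∑ i, ∑ j, if i < j then Lam μ hb i j (Lam μ hb i j f) x else 0)
        = (hb : ℂ) ^ 2 *
          (-(∑ i, (x i : ℂ) ^ 2) * lapD μ f x + XD μ (XD μ f) x
            + XD μ (fun y => ((N : ℂ) - 2) * f y
                + 2 * ∑ i, (μ i : ℂ) * Rop i f y) x) := by
  intro x hx
  have hstep : (∑ i, ∑ j, if i < j then Lam μ hb i j (Lam μ hb i j f) x else 0)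
      = ∑ i, ∑ j, if i < j then
          -(hb:ℂ)^2 * ((x i : ℂ)^2 * Dop μ j (Dop μ j f) x + (x j : ℂ)^2 * Dop μ i (Dop μ i f) x
            - (x i : ℂ) * (x j : ℂ) * (Dop μ j (Dop μ i f) x + Dop μ i (Dop μ j f) x)
            - (x i : ℂ) * Dop μ i f x - (x j : ℂ) * Dop μ j f x
            - 2 * (μ j : ℂ) * (x i : ℂ) * Dop μ i f (flipC j x)
            - 2 * (μ i : ℂ) * (x j : ℂ) * Dop μ j f (flipC i x)) else 0 := by
    refine Finset.sum_congr rfl fun i _ => Finset.sum_congr rfl fun j _ => ?_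
    by_cases h : i < j
    · rw [if_pos h, if_pos h, lam_lam μ hb f hf i j (ne_of_lt h) x hx]
    · rw [if_neg h, if_neg h]
  calc (∑ i, ∑ j, if i < j then Lam μ hb i j (Lam μ hb i j f) x else 0)
      = ∑ i, ∑ j, if i < j then
          -(hb:ℂ)^2 * ((x i : ℂ)^2 * Dop μ j (Dop μ j f) x + (x j : ℂ)^2 * Dop μ i (Dop μ i f) x
            - (x i : ℂ) * (x j : ℂ) * (Dop μ j (Dop μ i f) x + Dop μ i (Dop μ j f) x)
            - (x i : ℂ) * Dop μ i f x - (x j : ℂ) * Dop μ j f x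
            - 2 * (μ j : ℂ) * (x i : ℂ) * Dop μ i f (flipC j x)
            - 2 * (μ i : ℂ) * (x j : ℂ) * Dop μ j f (flipC i x)) else 0 := hstep
    _ = (hb:ℂ)^2 * (-(∑ i, (x i : ℂ)^2) * (∑ i, Dop μ i (Dop μ i f) x)
          + ((∑ i, ∑ j, (x i : ℂ) * (x j : ℂ) * Dop μ i (Dop μ j f) x)
            + (∑ i, (x i : ℂ) * Dop μ i f x)
            + 2 * ∑ i, (μ i : ℂ) * (x i : ℂ) * Dop μ i f (flipC i x))
          + (((N:ℂ) - 2) * (∑ i, (x i : ℂ) * Dop μ i f x)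
            + 2 * ∑ i, ∑ j, (μ j : ℂ) * (x i : ℂ)
                * ((if i = j then (-1:ℂ) else 1) * Dop μ i f (flipC j x)))) :=
        key_sum N (fun i => ((x i : ℝ) : ℂ)) (fun i => Dop μ i f x) (fun i => ((μ i : ℝ) : ℂ))
          (fun i j => Dop μ i (Dop μ j f) x) (fun i j => Dop μ i f (flipC j x)) ((hb:ℂ)^2)
    _ = _ := by
        rw [XD_XD μ f hf x hx, XD_comb μ f hf x hx,
          show lapD μ f x = ∑ i, Dop μ i (Dop μ i f) x from rfl]

end
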